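/- Let 0 ≤ i < j ≤ n−1. If δ(i) ≤ δ(j), then 2n − 4 + e/2 ≥ 2i + j. -/

import Mathlib

/-!
With `q = √s` we have `t = q^e`, so every factor of `δ` is a power of `q`. The ratio
`δ(k)/δ(k-1) = (s^(n-k-1) t + 1)(s^(n-k) - 1)/(s^(k+1) - 1)` is less than `s` times its
leading term, i.e. less than `q^(4n-6k-2+e)`. Multiplying over `i < k ≤ j` gives
`δ(j) < δ(i) q^((j-i)(4n-5+e-3i-3j))`, and if `2i + j > 2n - 4 + e/2` and `j ≥ i + 2` the exponent
is `≤ 0`. For `j = i + 1` the leading term alone is `≤ q⁻¹`, and a direct estimate of the single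
ratio gives `δ(i+1) < δ(i)`.
-/

open Finset

/-- `t = s^(e/2)` as a real number. -/
noncomputable def tval (s e : ℕ) : ℝ := (s : ℝ) ^ ((e : ℝ) / 2)

/-- `δ(i) = |Δ_i|`, the number of `i`-dimensional singular subspaces of a finite
polar space of rank `n` with orders `(s, …, s, t)`, `t = s^(e/2)`. -/
noncomputable def delta (n s e : ℕ) (i : ℤ) : ℝ :=
  (∏ u ∈ Finset.Icc (0:ℤ) i, ((s:ℝ) ^ ((n:ℤ) - u - 1) * tval s e + 1)) *
  (∏ u ∈ Finset.Icc (0:ℤ) i, ((s:ℝ) ^ ((n:ℤ) - u) - 1)) /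
  (∏ u ∈ Finset.Icc (0:ℤ) i, ((s:ℝ) ^ (u + 1) - 1))

lemma add_one_mul_sub_one_lt {x y z : ℝ} (hy : 1 < y) (hxy : x * y < z) (hyz : y * y ≤ z) :
    (x + 1) * (y - 1) < z - 1 := by
  nlinarith [mul_pos (by linarith : (0:ℝ) < y - 1) (by linarith : (0:ℝ) < y)]

lemma add_one_mul_sub_one_div_lt {c x y z : ℝ} (hc : 2 ≤ c) (hx : 1 ≤ x) (hcy : c ≤ y)
    (hyx : y ≤ c * x) (hz : c * c ≤ z) :
    (x + 1) * (y - 1) / (z - 1) < c * x * y / z := by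
  rw [div_lt_div_iff₀ (by nlinarith) (by nlinarith)]
  have hnum : c * ((x + 1) * (y - 1)) < (2 * c - 1) * (x * y) := by
    nlinarith [mul_nonneg (mul_nonneg (sub_nonneg.2 hx) (by linarith : 0 ≤ y))
      (by linarith : 0 ≤ c - 1)]
  have hden : (2 * c - 1) * z ≤ c * c * (z - 1) := by
    nlinarith [mul_nonneg (mul_nonneg (by linarith : 0 ≤ c) (by linarith : 0 ≤ c - 2))
      (by nlinarith : 0 ≤ z)]
  have hxy : 0 ≤ x * y := by nlinarith
  nlinarith [mul_lt_mul_of_pos_right hnum (by nlinarith : 0 < z),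
    mul_le_mul_of_nonneg_left hden hxy]

noncomputable def ratio (n s e : ℕ) (k : ℤ) : ℝ :=
  ((s:ℝ) ^ ((n:ℤ) - k - 1) * tval s e + 1) * ((s:ℝ) ^ ((n:ℤ) - k) - 1) / ((s:ℝ) ^ (k + 1) - 1)

lemma delta_add_one (n s e : ℕ) {i : ℤ} (hi : -1 ≤ i) :
    delta n s e (i + 1) = delta n s e i * ratio n s e (i + 1) := by
  have hIcc : Icc (0:ℤ) (i + 1) = insert (i + 1) (Icc 0 i) :=
    (insert_Icc_right_eq_Icc_add_one (by omega)).symm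
  have hnot : i + 1 ∉ Icc (0:ℤ) i := by simp
  rw [delta, delta, ratio, hIcc, prod_insert hnot, prod_insert hnot, prod_insert hnot,
    mul_mul_mul_comm, mul_div_mul_comm, mul_comm]

lemma delta_pos {n s e : ℕ} (hs : 2 ≤ s) {i : ℤ} (hi : i ≤ n - 1) : 0 < delta n s e i := by
  have hs1 : (1:ℝ) < s := by exact_mod_cast hs
  have ht : 0 ≤ tval s e := Real.rpow_nonneg (Nat.cast_nonneg s) _
  refine div_pos (mul_pos (prod_pos fun u _ => by positivity) (prod_pos fun u hu => ?_))
    (prod_pos fun u hu => ?_) <;> rw [mem_Icc] at hu <;>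
    exact sub_pos.2 (one_lt_zpow₀ hs1 (by omega))

lemma one_lt_sqrt_natCast {s : ℕ} (hs : 2 ≤ s) : 1 < √(s:ℝ) :=
  (Real.lt_sqrt zero_le_one).2 (by norm_num; exact_mod_cast hs)

lemma tval_eq_sqrt_pow (s e : ℕ) : tval s e = √(s:ℝ) ^ e := by
  rw [tval, Real.sqrt_eq_rpow, ← Real.rpow_natCast, ← Real.rpow_mul (Nat.cast_nonneg s)]
  ring_nf

lemma natCast_zpow_eq_sqrt_zpow (s : ℕ) (m : ℤ) : (s:ℝ) ^ m = √(s:ℝ) ^ (2 * m) := by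
  rw [zpow_mul, zpow_ofNat, Real.sq_sqrt (Nat.cast_nonneg s)]

lemma ratio_eq_sqrt_zpow {s : ℕ} (hs : 0 < s) (n e : ℕ) (k : ℤ) :
    ratio n s e k = (√(s:ℝ) ^ (2 * (n - k - 1) + e) + 1) * (√(s:ℝ) ^ (2 * (n - k)) - 1) /
      (√(s:ℝ) ^ (2 * (k + 1)) - 1) := by
  have hq : √(s:ℝ) ≠ 0 := (Real.sqrt_pos.2 (by exact_mod_cast hs)).ne'
  rw [ratio, tval_eq_sqrt_pow, natCast_zpow_eq_sqrt_zpow, natCast_zpow_eq_sqrt_zpow,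
    natCast_zpow_eq_sqrt_zpow, zpow_add₀ hq, zpow_natCast]

lemma ratio_lt_sqrt_zpow {n s e : ℕ} (hs : 2 ≤ s) {k : ℤ} (hk : 1 ≤ k) (hkn : k ≤ n - 1) :
    ratio n s e k < √(s:ℝ) ^ (4 * n - 6 * k - 2 + e) := by
  have hq := one_lt_sqrt_natCast hs
  have hq0 : √(s:ℝ) ≠ 0 := by positivity
  have hmono : ∀ a b : ℤ, a ≤ b → √(s:ℝ) ^ a ≤ √(s:ℝ) ^ b := fun a b => zpow_le_zpow_right₀ hq.le
  have hc : (2:ℝ) ≤ √(s:ℝ) ^ (2:ℤ) := by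
    rw [zpow_ofNat, Real.sq_sqrt (Nat.cast_nonneg s)]; exact_mod_cast hs
  rw [ratio_eq_sqrt_zpow (by omega)]
  convert add_one_mul_sub_one_div_lt (x := √(s:ℝ) ^ (2 * (n - k - 1) + e))
    (y := √(s:ℝ) ^ (2 * (n - k))) (z := √(s:ℝ) ^ (2 * (k + 1))) hc (one_le_zpow₀ hq.le (by omega))
    (hmono _ _ (by omega)) ?_ ?_ using 1
  · rw [← zpow_add₀ hq0, ← zpow_add₀ hq0, ← zpow_sub₀ hq0]
    congr 1; ring
  · rw [← zpow_add₀ hq0]; exact hmono _ _ (by omega)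
  · rw [← zpow_add₀ hq0]; exact hmono _ _ (by omega)

lemma ratio_lt_one {n s e : ℕ} (hs : 2 ≤ s) {k : ℤ} (hkn : k ≤ n - 1)
    (h : 4 * n - 3 + e ≤ 6 * k) : ratio n s e k < 1 := by
  have hq := one_lt_sqrt_natCast hs
  have hq0 : √(s:ℝ) ≠ 0 := by positivity
  have hz : 1 < √(s:ℝ) ^ (2 * (k + 1)) := one_lt_zpow₀ hq (by omega)
  rw [ratio_eq_sqrt_zpow (by omega), div_lt_one (by linarith)]
  refine add_one_mul_sub_one_lt (one_lt_zpow₀ hq (by omega)) ?_ ?_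
  · rw [← zpow_add₀ hq0]; exact zpow_lt_zpow_right₀ hq (by omega)
  -- this needs `6k ≥ 4n - 2`, which for `e = 0` follows from `h` by parity
  · rw [← zpow_add₀ hq0]; exact zpow_le_zpow_right₀ hq.le (by omega)

lemma delta_lt_mul_sqrt_zpow {n s e : ℕ} (hs : 2 ≤ s) {i j : ℤ} (hi : 0 ≤ i) (hij : i < j)
    (hj : j ≤ n - 1) :
    delta n s e j < delta n s e i * √(s:ℝ) ^ ((j - i) * (4 * n - 5 + e - 3 * i - 3 * j)) := by
  have hq0 : 0 < √(s:ℝ) := by have := one_lt_sqrt_natCast hs; positivity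
  induction j, hij using Int.leInduction with
  | base =>
    rw [delta_add_one n s e (by omega)]
    refine (mul_lt_mul_of_pos_left (ratio_lt_sqrt_zpow hs (by omega) hj)
      (delta_pos hs (by omega))).trans_eq ?_
    congr 2; ring
  | succ j hij ih =>
    calc delta n s e (j + 1) = delta n s e j * ratio n s e (j + 1) := delta_add_one n s e (by omega)
      _ < delta n s e j * √(s:ℝ) ^ (4 * n - 6 * (j + 1) - 2 + e) :=
        mul_lt_mul_of_pos_left (ratio_lt_sqrt_zpow hs (by omega) hj) (delta_pos hs (by omega))
      _ < delta n s e i * √(s:ℝ) ^ ((j - i) * (4 * n - 5 + e - 3 * i - 3 * j)) *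
          √(s:ℝ) ^ (4 * n - 6 * (j + 1) - 2 + e) :=
        mul_lt_mul_of_pos_right (ih (by omega)) (zpow_pos hq0 _)
      _ = _ := by
        rw [mul_assoc, ← zpow_add₀ hq0.ne']
        congr 2; ring

theorem stmt_5_general (n s e : ℕ) (hs : 2 ≤ s)
    (i j : ℤ) (hi : 0 ≤ i) (hij : i < j) (hj : j ≤ (n:ℤ) - 1)
    (h : delta n s e i ≤ delta n s e j) :
    2 * (n:ℝ) - 4 + (e:ℝ)/2 ≥ 2 * (i:ℝ) + (j:ℝ) := by
  by_contra hlt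
  have hsum : 4 * (n:ℤ) - 7 + e ≤ 4 * i + 2 * j := by
    have : ((4 * n - 8 + e : ℤ) : ℝ) < ((4 * i + 2 * j : ℤ) : ℝ) := by push_cast; linarith
    have := Int.cast_lt.1 this
    omega
  refine absurd h (not_le.2 ?_)
  have hδ := delta_pos (e := e) hs (show i ≤ n - 1 by omega)
  obtain rfl | hj2 : j = i + 1 ∨ i + 2 ≤ j := by omega
  · rw [delta_add_one n s e (by omega)]
    exact mul_lt_of_lt_one_right hδ (ratio_lt_one hs hj (by omega))
  · calc delta n s e j < delta n s e i * √(s:ℝ) ^ ((j - i) * (4 * n - 5 + e - 3 * i - 3 * j)) :=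
          delta_lt_mul_sqrt_zpow hs hi hij hj
      _ ≤ delta n s e i := mul_le_of_le_one_right hδ.le
          (zpow_le_one_of_nonpos₀ (one_lt_sqrt_natCast hs).le
            (mul_nonpos_of_nonneg_of_nonpos (by omega) (by omega)))

theorem stmt_5 (n s e : ℕ) (hn : 3 ≤ n) (hs : 2 ≤ s) (he : e ≤ 4)
    (i j : ℤ) (hi : 0 ≤ i) (hij : i < j) (hj : j ≤ (n:ℤ) - 1)
    (h : delta n s e i ≤ delta n s e j) :
    2 * (n:ℝ) - 4 + (e:ℝ)/2 ≥ 2 * (i:ℝ) + (j:ℝ) :=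
  stmt_5_general n s e hs i j hi hij hj h
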